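/- For every integer r > 0, T(2↑↑(r+3), 16) ≥ r + 1; that is, there is no one-sided colour reduction algorithm from 2↑↑(r+3) colours to 16 colours running in r rounds. -/

import Mathlib

/-- A one-sided colour reduction algorithm from `n` colours to `c` colours running in
`t` rounds: a function `B : [n]^(t+1) → [c]` such that for any sequence
`x_0, …, x_(t+1)` with `x_i ≠ x_(i+1)` for all `i`, the outputs on the two
overlapping windows differ. -/
def IsOneSided (n c t : ℕ) (B : (Fin (t + 1) → Fin n) → Fin c) : Prop :=
  ∀ x : Fin (t + 1 + 1) → Fin n,
    (∀ i : Fin (t + 1), x i.castSucc ≠ x i.succ) →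
      B (fun i => x i.castSucc) ≠ B (fun i => x i.succ)

/-- `T n c` is the least number of rounds of a one-sided colour reduction algorithm
from `n` colours to `c` colours. -/
noncomputable def T (n c : ℕ) : ℕ := sInf {t | ∃ B, IsOneSided n c t B}

/-- A two-sided colour reduction algorithm from `n` colours to `c` colours running in
`t` rounds: a function `A : [n]^(2t+1) → [c]` such that for any sequence
`x_0, …, x_(2t+1)` with `x_i ≠ x_(i+1)` for all `i`, the outputs on the two
overlapping windows differ. -/
def IsTwoSided (n c t : ℕ) (A : (Fin (2 * t + 1) → Fin n) → Fin c) : Prop :=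
  ∀ x : Fin (2 * t + 1 + 1) → Fin n,
    (∀ i : Fin (2 * t + 1), x i.castSucc ≠ x i.succ) →
      A (fun i => x i.castSucc) ≠ A (fun i => x i.succ)

/-- `C n c` is the least number of rounds of a two-sided colour reduction algorithm
from `n` colours to `c` colours. -/
noncomputable def C (n c : ℕ) : ℕ := sInf {t | ∃ A, IsTwoSided n c t A}

/-- Tetration (power tower) with base 2: `tpow 0 = 1`, `tpow (i+1) = 2 ^ tpow i`. -/
def tpow : ℕ → ℕ
  | 0 => 1
  | i + 1 => 2 ^ tpow i

/-- `logStar n` is the least `i` such that the `i`-fold iterated base-2 logarithm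
of `n` is at most `1`. -/
noncomputable def logStar (n : ℕ) : ℕ :=
  sInf {i | (fun x : ℝ => Real.logb 2 x)^[i] (n : ℝ) ≤ 1}

lemma base_le {n c : ℕ} (B : (Fin 1 → Fin n) → Fin c) (h : IsOneSided n c 0 B) : n ≤ c := by
  have hinj : Function.Injective (fun a : Fin n => B (fun _ => a)) := by
    intro a b hab
    by_contra hne
    have hx : ∀ i : Fin 1, (![a, b] : Fin 2 → Fin n) i.castSucc ≠ ![a, b] i.succ := by
      intro i; fin_cases i; simpa using hne
    have hgoal := h ![a, b] hx
    have e1 : (fun i : Fin 1 => (![a, b] : Fin 2 → Fin n) i.castSucc) = fun _ => a := by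
      funext i; fin_cases i; rfl
    have e2 : (fun i : Fin 1 => (![a, b] : Fin 2 → Fin n) i.succ) = fun _ => b := by
      funext i; fin_cases i; rfl
    rw [e1, e2] at hgoal
    exact hgoal hab
  simpa using Fintype.card_le_of_injective _ hinj

lemma card_nonempty_finsets (c : ℕ) :
    Fintype.card {S : Finset (Fin c) // S.Nonempty} = 2 ^ c - 1 := by
  classical
  have h1 : Fintype.card {S : Finset (Fin c) // S.Nonempty}
      = Fintype.card {S : Finset (Fin c) // ¬ S = ∅} :=
    Fintype.card_congr (Equiv.subtypeEquivRight (fun S => Finset.nonempty_iff_ne_empty))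
  rw [h1, Fintype.card_subtype_compl, Fintype.card_subtype_eq (∅ : Finset (Fin c))]
  simp

lemma speedup {n c t : ℕ} (hn : 2 ≤ n) (B : (Fin (t + 1 + 1) → Fin n) → Fin c)
    (h : IsOneSided n c (t + 1) B) : ∃ B', IsOneSided n (2 ^ c - 1) t B' := by
  classical
  set S : (Fin (t + 1) → Fin n) → Finset (Fin c) :=
    fun x => (Finset.univ.erase (x (Fin.last t))).image (fun y => B (Fin.snoc x y)) with hS
  have hSne : ∀ x, (S x).Nonempty := by
    intro x
    apply Finset.Nonempty.image
    rw [← Finset.card_pos, Finset.card_erase_of_mem (Finset.mem_univ _), Finset.card_univ]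
    simp only [Fintype.card_fin]
    omega
  let e : {s : Finset (Fin c) // s.Nonempty} ≃ Fin (2 ^ c - 1) :=
    Fintype.equivFinOfCardEq (card_nonempty_finsets c)
  refine ⟨fun x => e ⟨S x, hSne x⟩, ?_⟩
  intro x hx hEq
  have hSeq : S (fun i => x i.castSucc) = S (fun i => x i.succ) :=
    congrArg Subtype.val (e.injective hEq)
  -- Claim 1 : B x ∈ S (window 0)
  have hmem : B x ∈ S (fun i => x i.castSucc) := by
    rw [hS]
    simp only [Finset.mem_image, Finset.mem_erase, Finset.mem_univ, and_true]
    refine ⟨x (Fin.last (t + 1)), ?_, ?_⟩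
    · have h0 := hx (Fin.last t)
      rw [Fin.succ_last] at h0
      exact h0.symm
    · congr 1
      funext j
      refine Fin.lastCases ?_ (fun i => ?_) j
      · simp
      · simp
  -- Claim 2 : B x ∉ S (window 1)
  have hnotmem : B x ∉ S (fun i => x i.succ) := by
    rw [hS]
    simp only [Finset.mem_image, Finset.mem_erase, Finset.mem_univ, and_true, not_exists]
    rintro y ⟨hy, hyB⟩
    set z : Fin (t + 1 + 1 + 1) → Fin n := Fin.snoc x y with hz
    have hzx : ∀ i : Fin (t + 1 + 1), z i.castSucc ≠ z i.succ := by
      refine Fin.lastCases ?_ (fun i => ?_)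
      · rw [hz]
        simp only [Fin.succ_last, Fin.snoc_castSucc, Fin.snoc_last]
        intro hxy
        apply hy
        rw [← hxy, Fin.succ_last]
      · rw [hz, Fin.succ_castSucc]
        simp only [Fin.snoc_castSucc]
        exact hx i
    have hkey := h z hzx
    have e1 : (fun i : Fin (t + 1 + 1) => z i.castSucc) = x := by
      funext j
      rw [hz]
      simp only [Fin.snoc_castSucc]
    have e2 : (fun i : Fin (t + 1 + 1) => z i.succ) = Fin.snoc (fun i => x i.succ) y := by
      funext j
      refine Fin.lastCases ?_ (fun i => ?_) j
      · rw [hz]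
        simp [Fin.succ_last]
      · rw [hz, Fin.succ_castSucc]
        simp only [Fin.snoc_castSucc]
    rw [e1, e2] at hkey
    exact hkey hyB.symm
  rw [hSeq] at hmem
  exact hnotmem hmem

def chainBound : ℕ → ℕ → ℕ
  | 0, c => c
  | t + 1, c => chainBound t (2 ^ c - 1)

lemma chain {n : ℕ} (hn : 2 ≤ n) :
    ∀ t c, (∃ B, IsOneSided n c t B) → n ≤ chainBound t c := by
  intro t
  induction t with
  | zero => rintro c ⟨B, hB⟩; exact base_le B hB
  | succ t ih => rintro c ⟨B, hB⟩; exact ih _ (speedup hn B hB)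

lemma one_le_tpow (k : ℕ) : 1 ≤ tpow k := by
  induction k with
  | zero => simp [tpow]
  | succ k ih => exact le_trans ih (by simpa [tpow] using Nat.le_of_lt ((Nat.lt_two_pow_self (n := tpow k))))

lemma two_le_tpow (k : ℕ) : 2 ≤ tpow (k + 1) := by
  calc (2 : ℕ) = 2 ^ 1 := rfl
  _ ≤ 2 ^ tpow k := Nat.pow_le_pow_right (by norm_num) (one_le_tpow k)
  _ = tpow (k + 1) := rfl

lemma chainBound_lt : ∀ (t c k : ℕ), c < tpow k → chainBound t c < tpow (k + t) := by
  intro t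
  induction t with
  | zero => intro c k h; simpa [chainBound] using h
  | succ t ih =>
    intro c k h
    have h1 : 2 ^ c - 1 < tpow (k + 1) := by
      have : 2 ^ c ≤ 2 ^ tpow k := Nat.pow_le_pow_right (by norm_num) (Nat.le_of_lt h)
      have h2 : 0 < 2 ^ c := by positivity
      simp only [tpow] at *
      omega
    have := ih (2 ^ c - 1) (k + 1) h1
    have hk : k + 1 + t = k + (t + 1) := by omega
    rw [hk] at this
    exact this

lemma no_alg (r : ℕ) (hr : 0 < r) : ¬ ∃ B, IsOneSided (tpow (r + 3)) 16 r B := by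
  rintro ⟨B, hB⟩
  obtain ⟨s, rfl⟩ : ∃ s, r = s + 1 := ⟨r - 1, by omega⟩
  have hn : 2 ≤ tpow (s + 1 + 3) := two_le_tpow _
  obtain ⟨B', hB'⟩ := speedup hn B hB
  have h1 : tpow (s + 1 + 3) ≤ chainBound s (2 ^ 16 - 1) := chain hn s _ ⟨B', hB'⟩
  have h2 : chainBound s (2 ^ 16 - 1) < tpow (4 + s) := by
    apply chainBound_lt
    have : tpow 4 = 2 ^ 16 := by norm_num [tpow]
    omega
  have : (4 : ℕ) + s = s + 1 + 3 := by omega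
  rw [this] at h2
  omega

lemma exists_testBit_ne {a b : ℕ} (h : a ≠ b) : ∃ i, a.testBit i ≠ b.testBit i := by
  by_contra hc
  push_neg at hc
  exact h (Nat.eq_of_testBit_eq (by simpa using hc))

noncomputable def cv (a b : ℕ) : ℕ :=
  if h : a = b then 0
  else 2 * Nat.find (exists_testBit_ne h) +
    (if a.testBit (Nat.find (exists_testBit_ne h)) then 1 else 0)

lemma cv_ne {a b c : ℕ} (hab : a ≠ b) (hbc : b ≠ c) : cv a b ≠ cv b c := by
  unfold cv
  rw [dif_neg hab, dif_neg hbc]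
  intro hEq
  have hi : a.testBit (Nat.find (exists_testBit_ne hab))
      ≠ b.testBit (Nat.find (exists_testBit_ne hab)) := Nat.find_spec (exists_testBit_ne hab)
  set i := Nat.find (exists_testBit_ne hab) with hidef
  set j := Nat.find (exists_testBit_ne hbc) with hjdef
  split_ifs at hEq with h1 h2 h2
  · have hij : i = j := by omega
    rw [h1, hij, h2] at hi
    exact hi rfl
  · omega
  · omega
  · have hij : i = j := by omega
    simp only [Bool.not_eq_true] at h1 h2
    rw [h1, hij, h2] at hi
    exact hi rfl

lemma cv_lt {a b k : ℕ} (ha : a < 2 ^ k) (hb : b < 2 ^ k) (hab : a ≠ b) : cv a b < 2 * k := by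
  unfold cv
  rw [dif_neg hab]
  have hi : a.testBit (Nat.find (exists_testBit_ne hab))
      ≠ b.testBit (Nat.find (exists_testBit_ne hab)) := Nat.find_spec (exists_testBit_ne hab)
  set i := Nat.find (exists_testBit_ne hab) with hidef
  have hik : i < k := by
    by_contra hik
    push_neg at hik
    have h2k : (2:ℕ) ^ k ≤ 2 ^ i := Nat.pow_le_pow_right (by norm_num) hik
    rw [Nat.testBit_eq_false_of_lt (lt_of_lt_of_le ha h2k),
        Nat.testBit_eq_false_of_lt (lt_of_lt_of_le hb h2k)] at hi
    exact hi rfl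
  split <;> omega

-- composition
lemma compose {n m c t : ℕ} (g : Fin n → Fin n → Fin m)
    (hg : ∀ a b c', a ≠ b → b ≠ c' → g a b ≠ g b c')
    (B : (Fin (t + 1) → Fin m) → Fin c) (hB : IsOneSided m c t B) :
    IsOneSided n c (t + 1) (fun x => B (fun i => g (x i.castSucc) (x i.succ))) := by
  intro x hx
  set y : Fin (t + 1 + 1) → Fin m := fun i => g (x i.castSucc) (x i.succ) with hy
  have hyc : ∀ i : Fin (t + 1), y i.castSucc ≠ y i.succ := by
    intro i
    rw [hy]
    simp only
    rw [Fin.succ_castSucc]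
    exact hg _ _ _ (hx i.castSucc) (by rw [← Fin.succ_castSucc]; exact (by
      have := hx i.succ
      rwa [← Fin.succ_castSucc] at this))
  have hkey := hB y hyc
  have e1 : (fun i : Fin (t + 1) => y i.castSucc)
      = fun i : Fin (t + 1) => g (x i.castSucc.castSucc) (x i.succ.castSucc) := by
    funext i
    rw [hy]
    simp only
    rw [Fin.succ_castSucc]
  have e2 : (fun i : Fin (t + 1) => y i.succ)
      = fun i : Fin (t + 1) => g (x i.castSucc.succ) (x i.succ.succ) := by
    funext i
    rw [hy]
    simp only
    rw [Fin.succ_castSucc]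
  rw [e1, e2] at hkey
  simpa only [Fin.succ_castSucc] using hkey

lemma two_mul_add_two_le {L : ℕ} (hL : 4 ≤ L) : 2 * L + 2 ≤ 2 ^ L := by
  induction L with
  | zero => omega
  | succ L ih =>
    rcases Nat.lt_or_ge L 4 with h | h
    · interval_cases L <;> simp_all
    · have := ih h
      have h2 : 2 ≤ 2 ^ L := Nat.one_lt_two_pow (by omega)
      rw [pow_succ]
      omega

lemma exists_alg (n : ℕ) : ∃ t B, IsOneSided n 16 t B := by
  induction n using Nat.strong_induction_on with
  | _ n ih =>
    by_cases hn : n ≤ 16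
    · refine ⟨0, fun x => Fin.castLE hn (x 0), ?_⟩
      intro x hx hEq
      have := hx 0
      apply this
      exact Fin.castLE_injective hn hEq
    · push_neg at hn
      set k := Nat.log 2 (n - 1) + 1 with hk
      have hn1 : 1 ≤ n - 1 := by omega
      have hpow : n ≤ 2 ^ k := by
        have := Nat.lt_pow_succ_log_self (b := 2) (by norm_num) (n - 1)
        rw [hk]
        omega
      have hL4 : 4 ≤ Nat.log 2 (n - 1) := by
        have h16 : (16 : ℕ) ≤ n - 1 := by omega
        calc (4:ℕ) = Nat.log 2 16 := (Nat.log_eq_of_pow_le_of_lt_pow (by norm_num) (by norm_num)).symm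
        _ ≤ Nat.log 2 (n - 1) := Nat.log_mono_right h16
      have hmlt : 2 * k < n := by
        have h1 := two_mul_add_two_le hL4
        have h2 : 2 ^ Nat.log 2 (n - 1) ≤ n - 1 := Nat.pow_log_le_self 2 (by omega)
        rw [hk]
        omega
      obtain ⟨t, B, hB⟩ := ih (2 * k) hmlt
      have hkpos : 0 < 2 * k := by omega
      refine ⟨t + 1, _, compose (n := n) (m := 2 * k)
        (fun a b => if hab : (a : ℕ) = (b : ℕ) then ⟨0, hkpos⟩
          else ⟨cv a b, cv_lt (lt_of_lt_of_le a.isLt hpow) (lt_of_lt_of_le b.isLt hpow) hab⟩)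
        ?_ B hB⟩
      intro a b c' hab hbc
      have hab' : (a : ℕ) ≠ (b : ℕ) := fun h => hab (Fin.ext h)
      have hbc' : (b : ℕ) ≠ (c' : ℕ) := fun h => hbc (Fin.ext h)
      intro hEq
      simp only [dif_neg hab', dif_neg hbc', Fin.mk.injEq] at hEq
      exact cv_ne hab' hbc' hEq

lemma pad {n c t : ℕ} (h : ∃ B, IsOneSided n c t B) : ∃ B, IsOneSided n c (t + 1) B := by
  obtain ⟨B, hB⟩ := h
  refine ⟨fun x => B (fun i => x i.castSucc), ?_⟩
  intro x hx
  have hx' : ∀ i : Fin (t + 1), (fun j : Fin (t + 1 + 1) => x j.castSucc) i.castSucc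
      ≠ (fun j : Fin (t + 1 + 1) => x j.castSucc) i.succ := by
    intro i
    simp only
    rw [← Fin.succ_castSucc]
    exact hx i.castSucc
  exact hB (fun j => x j.castSucc) hx'

lemma pad_le {n c t t' : ℕ} (htt : t ≤ t') (h : ∃ B, IsOneSided n c t B) :
    ∃ B, IsOneSided n c t' B := by
  induction t' with
  | zero => obtain rfl := Nat.le_zero.mp htt; exact h
  | succ t' ih =>
    rcases Nat.lt_or_ge t (t' + 1) with h1 | h1
    · exact pad (ih (by omega))
    · have : t = t' + 1 := by omega
      subst this
      exact h


/-- For every `r > 0`, `T(2↑↑(r+3), 16) ≥ r + 1`: there is no one-sided colour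
reduction algorithm from `2↑↑(r+3)` colours to `16` colours running in `r` rounds. -/
theorem stmt_11 (r : ℕ) (hr : 0 < r) :
    r + 1 ≤ T (tpow (r + 3)) 16 ∧
    ¬ ∃ B, IsOneSided (tpow (r + 3)) 16 r B := by
  refine ⟨?_, no_alg r hr⟩
  obtain ⟨t0, B0, hB0⟩ := exists_alg (tpow (r + 3))
  have hne : {t | ∃ B, IsOneSided (tpow (r + 3)) 16 t B}.Nonempty := ⟨t0, B0, hB0⟩
  have hmem := Nat.sInf_mem hne
  by_contra hlt
  push_neg at hlt
  have hTr : T (tpow (r + 3)) 16 ≤ r := by omega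
  exact no_alg r hr (pad_le hTr hmem)
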